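/- arXiv:0909.1098 — 5 statements merged into one kernel-verified Lean document; each statement's English description precedes it below -/
import Mathlib

section
/- Let G be a tree (a connected acyclic simple graph) with vertex set V and graph metric d, let v ∈ V be a fixed vertex, and let r ≥ 1 be an integer. Then there exists a 2-colored, r-disjoint, 3r-bounded covering of V: two families 𝒰¹, 𝒰² of subsets of V whose union covers V, such that any two distinct members of the same family are at distance ≥ r from each other, and every member has diameter ≤ 3r. (This is the standard (r,v)-covering of a tree used in the paper's construction.) -/
namespace TreeCoverAux

open SimpleGraph

variable {V : Type*} {G : SimpleGraph V}

/-- In a tree, any path realizes the distance. -/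
lemma path_length (hG : G.IsTree) {a b : V} {p : G.Walk a b} (hp : p.IsPath) :
    p.length = G.dist a b := by
  obtain ⟨q, hq, hql⟩ := hG.isConnected.exists_path_of_dist a b
  rw [(hG.existsUnique_path a b).unique hp hq, hql]

/-- The chosen geodesic path between two vertices of a tree. -/
noncomputable def geo (hG : G.IsTree) (a b : V) : G.Walk a b :=
  (hG.isConnected.exists_path_of_dist a b).choose

lemma geo_isPath (hG : G.IsTree) (a b : V) : (geo hG a b).IsPath :=
  (hG.isConnected.exists_path_of_dist a b).choose_spec.1

lemma geo_length (hG : G.IsTree) (a b : V) : (geo hG a b).length = G.dist a b :=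
  (hG.isConnected.exists_path_of_dist a b).choose_spec.2

lemma dist_getVert_le (hG : G.IsTree) {a b : V} (p : G.Walk a b) (j : ℕ) :
    G.dist a (p.getVert j) ≤ j := by
  induction j with
  | zero => simp
  | succ n ih =>
    rcases lt_or_ge n p.length with h | h
    · have hadj := p.adj_getVert_succ h
      have h1 : G.dist (p.getVert n) (p.getVert (n + 1)) ≤ 1 := by
        simpa using SimpleGraph.dist_le hadj.toWalk
      have h2 := hG.isConnected.dist_triangle (u := a) (v := p.getVert n)
        (w := p.getVert (n + 1))
      omega
    · rw [p.getVert_of_length_le (by omega)]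
      rw [p.getVert_of_length_le h] at ih
      omega

lemma getVert_dist_le (hG : G.IsTree) {a b : V} (p : G.Walk a b) {j : ℕ}
    (hj : j ≤ p.length) : G.dist (p.getVert j) b ≤ p.length - j := by
  have h := dist_getVert_le hG p.reverse (p.length - j)
  rw [Walk.getVert_reverse, Nat.sub_sub_self hj] at h
  rwa [SimpleGraph.dist_comm] at h

lemma geo_getVert_dist (hG : G.IsTree) {a b : V} {j : ℕ} (hj : j ≤ G.dist a b) :
    G.dist a ((geo hG a b).getVert j) = j ∧
      G.dist ((geo hG a b).getVert j) b = G.dist a b - j := by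
  have h1 := dist_getVert_le hG (geo hG a b) j
  have h2 := getVert_dist_le hG (geo hG a b) (j := j) (by rw [geo_length]; exact hj)
  rw [geo_length hG a b] at h2
  have h3 := hG.isConnected.dist_triangle (u := a) (v := (geo hG a b).getVert j) (w := b)
  omega

/-- Uniqueness of the vertex "between" `a` and `b` at a given distance from `a`. -/
lemma eq_geo_getVert (hG : G.IsTree) {a b m : V}
    (h : G.dist a m + G.dist m b = G.dist a b) :
    m = (geo hG a b).getVert (G.dist a m) := by
  set W := (geo hG a m).append (geo hG m b) with hWdef
  have hlen : W.length = G.dist a b := by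
    rw [hWdef, Walk.length_append, geo_length, geo_length, h]
  have hW : W.IsPath := W.isPath_of_length_eq_dist hlen
  have hEq : W = geo hG a b := (hG.existsUnique_path a b).unique hW (geo_isPath hG a b)
  have hv : W.getVert (G.dist a m) = m := by
    rw [hWdef, Walk.getVert_append, geo_length]
    simp
  rw [← hEq, hv]

/-- The geodesic to a vertex on a geodesic is an initial segment. -/
lemma geo_getVert_getVert (hG : G.IsTree) {a b : V} {j j0 : ℕ} (hj : j ≤ j0)
    (hj0 : j0 ≤ G.dist a b) :
    (geo hG a b).getVert j = (geo hG a ((geo hG a b).getVert j0)).getVert j := by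
  obtain ⟨hm1, hm2⟩ := geo_getVert_dist hG hj0
  set m := (geo hG a b).getVert j0 with hm
  obtain ⟨hu1, hu2⟩ := geo_getVert_dist hG (a := a) (b := m) (j := j) (by omega)
  set u := (geo hG a m).getVert j with hu
  rw [hm1] at hu2
  have hub : G.dist u b = G.dist a b - j := by
    have hle := hG.isConnected.dist_triangle (u := u) (v := m) (w := b)
    have hge := hG.isConnected.dist_triangle (u := a) (v := u) (w := b)
    omega
  have h := eq_geo_getVert hG (a := a) (b := b) (m := u) (by omega)
  rw [hu1] at h
  exact h.symm

lemma dist_le_of_mem_support (hG : G.IsTree) {a b u : V} (p : G.Walk a b)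
    (h : u ∈ p.support) : G.dist u b ≤ p.length := by
  classical
  exact le_trans (SimpleGraph.dist_le (p.dropUntil u h)) (Walk.length_dropUntil_le p h)

/-- Existence of the meet (median with the root) in a tree. -/
lemma exists_meet (hG : G.IsTree) (v x y : V) :
    ∃ j0, j0 ≤ G.dist v x ∧ j0 ≤ G.dist v y ∧
      (geo hG v x).getVert j0 = (geo hG v y).getVert j0 ∧
      G.dist x y + 2 * j0 = G.dist v x + G.dist v y := by
  classical
  set Lx := G.dist v x with hLx
  set Ly := G.dist v y with hLy
  set Pr : ℕ → Prop := fun j => (geo hG v x).getVert j = (geo hG v y).getVert j with hPr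
  have hP0 : Pr 0 := by simp [hPr]
  set j0 := Nat.findGreatest Pr (min Lx Ly) with hj0
  have hj0P : Pr j0 := Nat.findGreatest_spec (Nat.zero_le _) hP0
  have hj0le : j0 ≤ min Lx Ly := Nat.findGreatest_le _
  have hj0x : j0 ≤ Lx := le_trans hj0le (min_le_left _ _)
  have hj0y : j0 ≤ Ly := le_trans hj0le (min_le_right _ _)
  set m := (geo hG v x).getVert j0 with hm
  obtain ⟨hmx1, hmx2⟩ := geo_getVert_dist hG (a := v) (b := x) hj0x
  have hmyVert : (geo hG v y).getVert j0 = m := hj0P.symm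
  obtain ⟨hmy1, hmy2⟩ := geo_getVert_dist hG (a := v) (b := y) hj0y
  rw [hmyVert] at hmy1 hmy2
  have hmsupx : m ∈ (geo hG v x).support :=
    Walk.mem_support_iff_exists_getVert.mpr ⟨j0, rfl, by rw [geo_length]; exact hj0x⟩
  have hmsupy : m ∈ (geo hG v y).support :=
    Walk.mem_support_iff_exists_getVert.mpr ⟨j0, hmyVert, by rw [geo_length]; exact hj0y⟩
  set dx := (geo hG v x).dropUntil m hmsupx with hdx
  set dy := (geo hG v y).dropUntil m hmsupy with hdy
  have hdxpath : dx.IsPath := (geo_isPath hG v x).dropUntil hmsupx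
  have hdypath : dy.IsPath := (geo_isPath hG v y).dropUntil hmsupy
  have hsx : ((geo hG v x).takeUntil m hmsupx).length + dx.length = Lx := by
    have h := congrArg Walk.length ((geo hG v x).take_spec hmsupx)
    rw [Walk.length_append] at h
    rw [hdx, h, geo_length]
  have hsy : ((geo hG v y).takeUntil m hmsupy).length + dy.length = Ly := by
    have h := congrArg Walk.length ((geo hG v y).take_spec hmsupy)
    rw [Walk.length_append] at h
    rw [hdy, h, geo_length]
  have htx : ((geo hG v x).takeUntil m hmsupx).length = j0 := by
    rw [path_length hG ((geo_isPath hG v x).takeUntil hmsupx), hmx1]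
  have hty : ((geo hG v y).takeUntil m hmsupy).length = j0 := by
    rw [path_length hG ((geo_isPath hG v y).takeUntil hmsupy), hmy1]
  have hdxlen : dx.length = Lx - j0 := by omega
  have hdylen : dy.length = Ly - j0 := by omega
  -- a vertex common to both final segments must be the meet `m`
  have hkey : ∀ u, u ∈ dx.support → u ∈ dy.support → u = m := by
    intro u hux huy
    have hux' : u ∈ (geo hG v x).support := Walk.support_dropUntil_subset _ hmsupx hux
    have huy' : u ∈ (geo hG v y).support := Walk.support_dropUntil_subset _ hmsupy huy
    obtain ⟨i, hi, hile⟩ := Walk.mem_support_iff_exists_getVert.mp hux'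
    obtain ⟨i', hi', hile'⟩ := Walk.mem_support_iff_exists_getVert.mp huy'
    rw [geo_length] at hile hile'
    obtain ⟨hi1, hi2⟩ := geo_getVert_dist hG (a := v) (b := x) hile
    obtain ⟨hi'1, hi'2⟩ := geo_getVert_dist hG (a := v) (b := y) hile'
    rw [hi] at hi1 hi2
    rw [hi'] at hi'1 hi'2
    have hii' : i = i' := by omega
    have hPi : Pr i := by
      simp only [hPr]
      rw [hi, hii', hi']
    have hij0 : i ≤ j0 := Nat.le_findGreatest (by omega) hPi
    have hdux : G.dist u x ≤ dx.length := dist_le_of_mem_support hG dx hux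
    have hieq : i = j0 := by omega
    rw [← hi, hieq]
  have hW : (dx.reverse.append dy).IsPath := by
    rw [Walk.isPath_def, Walk.support_append]
    refine List.Nodup.append ?_ ?_ ?_
    · exact hdxpath.reverse.support_nodup
    · exact hdypath.support_nodup.tail
    · intro u hu1 hu2
      rw [Walk.support_reverse, List.mem_reverse] at hu1
      have hu2' : u ∈ dy.support := List.mem_of_mem_tail hu2
      have hum := hkey u hu1 hu2'
      subst hum
      have hnd := hdypath.support_nodup
      rw [dy.support_eq_cons] at hnd
      exact (List.nodup_cons.mp hnd).1 hu2
  have hWlen := path_length hG hW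
  rw [Walk.length_append, Walk.length_reverse, hdxlen, hdylen] at hWlen
  exact ⟨j0, hj0x, hj0y, hj0P, by omega⟩

/-- The key tree lemma: geodesics from a common basepoint agree up to the meet level. -/
lemma getVert_eq_of_dist (hG : G.IsTree) (v x y : V) {j : ℕ}
    (h : 2 * j + G.dist x y ≤ G.dist v x + G.dist v y) :
    (geo hG v x).getVert j = (geo hG v y).getVert j := by
  obtain ⟨j0, h1, h2, h3, h4⟩ := exists_meet hG v x y
  have hj : j ≤ j0 := by omega
  rw [geo_getVert_getVert hG hj h1, geo_getVert_getVert hG hj h2, h3]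

end TreeCoverAux

open TreeCoverAux in
/-- The standard `(r,v)`-covering of a tree: a 2-colored, `r`-disjoint, `3r`-bounded
covering of the vertex set of a tree by subsets, with respect to the graph metric. -/
theorem stmt_0 {V : Type*} (G : SimpleGraph V) (hG : G.IsTree) (v : V)
    (r : ℕ) (hr : 1 ≤ r) :
    ∃ 𝒰 : Fin 2 → Set (Set V),
      -- the union of the two families covers V
      (∀ x : V, ∃ i : Fin 2, ∃ U ∈ 𝒰 i, x ∈ U) ∧
      -- same-colored distinct members are at distance ≥ r
      (∀ i : Fin 2, ∀ U ∈ 𝒰 i, ∀ W ∈ 𝒰 i, U ≠ W →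
        ∀ x ∈ U, ∀ y ∈ W, r ≤ G.dist x y) ∧
      -- every member has diameter ≤ 3r
      (∀ i : Fin 2, ∀ U ∈ 𝒰 i, ∀ x ∈ U, ∀ y ∈ U, G.dist x y ≤ 3 * r) := by
  set s := (r + 1) / 2 with hs
  refine ⟨fun i => {S | ∃ k w, k % 2 = (i : ℕ) ∧
    S = {x | G.dist v x / r = k ∧ (geo hG v x).getVert (k * r - s) = w}}, ?_, ?_, ?_⟩
  · intro x
    exact ⟨⟨(G.dist v x / r) % 2, by omega⟩, _,
      ⟨G.dist v x / r, (geo hG v x).getVert ((G.dist v x / r) * r - s), rfl, rfl⟩,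
      ⟨rfl, rfl⟩⟩
  · rintro i U ⟨k, w, hki, rfl⟩ W ⟨k', w', hk'i, rfl⟩ hne x hx y hy
    obtain ⟨hxk, hxw⟩ := hx
    obtain ⟨hyk, hyw⟩ := hy
    have hLx1 : k * r ≤ G.dist v x := by rw [← hxk]; exact Nat.div_mul_le_self _ _
    have hLy1 : k' * r ≤ G.dist v y := by rw [← hyk]; exact Nat.div_mul_le_self _ _
    have hLx2 : G.dist v x < k * r + r := by
      have h1 : G.dist v x / r < k + 1 := by omega
      have h2 := (Nat.div_lt_iff_lt_mul (by omega : 0 < r)).mp h1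
      calc G.dist v x < (k + 1) * r := h2
        _ = k * r + r := by ring
    have hLy2 : G.dist v y < k' * r + r := by
      have h1 : G.dist v y / r < k' + 1 := by omega
      have h2 := (Nat.div_lt_iff_lt_mul (by omega : 0 < r)).mp h1
      calc G.dist v y < (k' + 1) * r := h2
        _ = k' * r + r := by ring
    by_cases hkk : k = k'
    · subst hkk
      have hww : w ≠ w' := by
        rintro rfl
        exact hne rfl
      by_contra hd
      push_neg at hd
      apply hww
      rw [← hxw, ← hyw]
      apply getVert_eq_of_dist hG
      have htri := hG.isConnected.dist_triangle (u := x) (v := v) (w := y)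
      rw [SimpleGraph.dist_comm (u := x) (v := v)] at htri
      omega
    · have hpar : k % 2 = k' % 2 := by omega
      have htri1 := hG.isConnected.dist_triangle (u := v) (v := x) (w := y)
      have htri2 := hG.isConnected.dist_triangle (u := v) (v := y) (w := x)
      rw [SimpleGraph.dist_comm (u := y) (v := x)] at htri2
      rcases Nat.lt_or_ge k k' with h | h
      · have h2 : k + 2 ≤ k' := by omega
        have h3 : (k + 2) * r ≤ k' * r := Nat.mul_le_mul_right r h2
        have h4 : (k + 2) * r = k * r + 2 * r := by ring
        omega
      · have h2 : k' + 2 ≤ k := by omega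
        have h3 : (k' + 2) * r ≤ k * r := Nat.mul_le_mul_right r h2
        have h4 : (k' + 2) * r = k' * r + 2 * r := by ring
        omega
  · rintro i U ⟨k, w, hki, rfl⟩ x hx y hy
    obtain ⟨hxk, hxw⟩ := hx
    obtain ⟨hyk, hyw⟩ := hy
    have hLx1 : k * r ≤ G.dist v x := by rw [← hxk]; exact Nat.div_mul_le_self _ _
    have hLy1 : k * r ≤ G.dist v y := by rw [← hyk]; exact Nat.div_mul_le_self _ _
    have hLx2 : G.dist v x < k * r + r := by
      have h1 : G.dist v x / r < k + 1 := by omega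
      have h2 := (Nat.div_lt_iff_lt_mul (by omega : 0 < r)).mp h1
      calc G.dist v x < (k + 1) * r := h2
        _ = k * r + r := by ring
    have hLy2 : G.dist v y < k * r + r := by
      have h1 : G.dist v y / r < k + 1 := by omega
      have h2 := (Nat.div_lt_iff_lt_mul (by omega : 0 < r)).mp h1
      calc G.dist v y < (k + 1) * r := h2
        _ = k * r + r := by ring
    obtain ⟨hw1, hw2⟩ := geo_getVert_dist hG (a := v) (b := x) (j := k * r - s) (by omega)
    obtain ⟨hw1', hw2'⟩ := geo_getVert_dist hG (a := v) (b := y) (j := k * r - s) (by omega)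
    rw [hxw] at hw1 hw2
    rw [hyw] at hw1' hw2'
    rw [SimpleGraph.dist_comm] at hw2
    have htri := hG.isConnected.dist_triangle (u := x) (v := w) (w := y)
    omega
end

section
/- Let G be a tree (a connected acyclic simple graph) with vertex set V and graph metric d, let v ∈ V be a fixed vertex, and let r ≥ 1 and 1 ≤ d₀ ≤ r be integers. Then there exists a 2-colored, r-disjoint, 3r-bounded covering of V one of whose members (of the first color) is the closed ball B_{d₀}(v) = {x ∈ V : d(v,x) ≤ d₀}: two families 𝒰¹, 𝒰² of subsets of V whose union covers V, with B_{d₀}(v) ∈ 𝒰¹, such that any two distinct members of the same family are at distance ≥ r from each other, and every member has diameter ≤ 3r. (This is the modified standard (r,d₀,v)-covering of a tree constructed in the paper.) -/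
open SimpleGraph Walk

private lemma path_len {V : Type*} [DecidableEq V] {G : SimpleGraph V} (hG : G.IsTree) {a b : V}
    (p : G.Walk a b) (hp : p.IsPath) : p.length = G.dist a b := by
  refine le_antisymm ?_ (SimpleGraph.dist_le p)
  obtain ⟨q, hq⟩ := hG.isConnected.exists_walk_length_eq_dist a b
  have hb : p = q.bypass := (hG.existsUnique_path a b).unique hp (Walk.bypass_isPath q)
  calc p.length = q.bypass.length := by rw [hb]
    _ ≤ q.length := Walk.length_bypass_le q
    _ = G.dist a b := hq

private lemma split_dist {V : Type*} [DecidableEq V] {G : SimpleGraph V} (hG : G.IsTree) {a b u : V}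
    (p : G.Walk a b) (hp : p.IsPath) (hu : u ∈ p.support) :
    G.dist a u + G.dist u b = G.dist a b := by
  have h1 := SimpleGraph.dist_le (p.takeUntil u hu)
  have h2 := SimpleGraph.dist_le (p.dropUntil u hu)
  have h3 : (p.takeUntil u hu).length + (p.dropUntil u hu).length = p.length := by
    rw [← Walk.length_append, Walk.take_spec]
  have h4 := path_len hG p hp
  have h5 := hG.isConnected.dist_triangle (u := a) (v := u) (w := b)
  omega

private lemma uniq_on_path {V : Type*} [DecidableEq V] {G : SimpleGraph V} (hG : G.IsTree) {v x u u' : V}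
    (p : G.Walk v x) (hp : p.IsPath) (hu : u ∈ p.support) (hu' : u' ∈ p.support)
    (hd : G.dist v u = G.dist v u') : u = u' := by
  have hc := hG.isConnected
  have hu2 : u ∈ ((p.takeUntil u' hu').append (p.dropUntil u' hu')).support := by
    rw [Walk.take_spec]; exact hu
  rcases (Walk.mem_support_append_iff _ _).1 hu2 with h1 | h1
  · have ht : (p.takeUntil u' hu').IsPath := hp.takeUntil hu'
    have e1 := split_dist hG _ ht h1
    have e0 : G.dist u u' = 0 := by omega
    exact hc.dist_eq_zero_iff.mp e0
  · have hdp : (p.dropUntil u' hu').IsPath := hp.dropUntil hu'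
    have e1 := split_dist hG _ hdp h1
    have e2 := split_dist hG p hp hu
    have e3 := split_dist hG p hp hu'
    have e0 : G.dist u' u = 0 := by omega
    exact (hc.dist_eq_zero_iff.mp e0).symm

private lemma ivt {V : Type*} {G : SimpleGraph V} (hc : G.Connected) (v : V) :
    ∀ {a b : V} (p : G.Walk a b) (t : ℕ), G.dist v a ≤ t → t ≤ G.dist v b →
      ∃ u ∈ p.support, G.dist v u = t := by
  intro a b p
  induction p with
  | nil =>
    intro t h1 h2
    exact ⟨_, Walk.start_mem_support _, le_antisymm h1 h2⟩
  | @cons a c b h' q ih =>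
    intro t h1 h2
    rcases eq_or_lt_of_le h1 with heq | hlt
    · exact ⟨a, Walk.start_mem_support _, heq⟩
    · have hac : G.dist a c ≤ 1 := by
        simpa using SimpleGraph.dist_le (Walk.cons h' Walk.nil)
      have h3 : G.dist v c ≤ t := by
        have := hc.dist_triangle (u := v) (v := a) (w := c)
        omega
      obtain ⟨u, hu, hut⟩ := ih t h3 h2
      exact ⟨u, by simp [hu], hut⟩

private lemma exists_anc {V : Type*} {G : SimpleGraph V} (hG : G.IsTree) (v : V) :
    ∃ anc : ℕ → V → V,
      (∀ x, anc 0 x = v) ∧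
      (∀ t x y, t ≤ G.dist v x → t ≤ G.dist v y → anc t x = anc t y →
        G.dist x y + 2 * t ≤ G.dist v x + G.dist v y) ∧
      (∀ t x y, t ≤ G.dist v x → t ≤ G.dist v y → anc t x ≠ anc t y →
        G.dist v x + G.dist v y ≤ G.dist x y + 2 * t) := by
  classical
  haveI := Classical.decEq V
  have hc := hG.isConnected
  choose P hP using fun x => (hG.existsUnique_path v x).exists
  have hmem : ∀ (t : ℕ) (x : V), t ≤ G.dist v x → ∃ u ∈ (P x).support, G.dist v u = t := by
    intro t x ht
    exact ivt hc v (P x) t (by simp [SimpleGraph.dist_self]) ht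
  let anc : ℕ → V → V := fun t x => if h : t ≤ G.dist v x then (hmem t x h).choose else v
  have hancm : ∀ (t : ℕ) (x : V) (h : t ≤ G.dist v x),
      anc t x ∈ (P x).support ∧ G.dist v (anc t x) = t := by
    intro t x h
    simp only [anc, dif_pos h]
    exact (hmem t x h).choose_spec
  have h0 : ∀ x, anc 0 x = v := by
    intro x
    have h := (hancm 0 x (Nat.zero_le _)).2
    exact (hc.dist_eq_zero_iff.mp h).symm
  refine ⟨anc, h0, ?_, ?_⟩
  · intro t x y hx hy he
    have h1 := split_dist hG (P x) (hP x) (hancm t x hx).1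
    have h2 := split_dist hG (P y) (hP y) (hancm t y hy).1
    have h3 := (hancm t x hx).2
    have h4 := (hancm t y hy).2
    have h5 := hc.dist_triangle (u := x) (v := anc t x) (w := y)
    have h6 : G.dist x (anc t x) = G.dist (anc t x) x := SimpleGraph.dist_comm
    have h7 : G.dist (anc t x) y = G.dist (anc t y) y := by rw [he]
    omega
  · intro t x y hx hy hne
    obtain ⟨Q, hQ⟩ := (hG.existsUnique_path x y).exists
    have hby : ((P x).append Q).bypass = P y :=
      (hG.existsUnique_path v y).unique (Walk.bypass_isPath _) (hP y)
    have hsub : (P y).support ⊆ ((P x).append Q).support := by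
      rw [← hby]; exact Walk.support_bypass_subset _
    have humem := hsub (hancm t y hy).1
    rcases (Walk.mem_support_append_iff _ _).1 humem with hcase | hcase
    · exact absurd (uniq_on_path hG (P x) (hP x) (hancm t x hx).1 hcase
        (by rw [(hancm t x hx).2, (hancm t y hy).2])) hne
    · have h1 := split_dist hG Q hQ hcase
      have h2 := split_dist hG (P y) (hP y) (hancm t y hy).1
      have h3 := (hancm t y hy).2
      have h4 := hc.dist_triangle (u := v) (v := anc t y) (w := x)
      have h5 : G.dist (anc t y) x = G.dist x (anc t y) := SimpleGraph.dist_comm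
      omega



/-- The modified standard `(r,d₀,v)`-covering of a tree: a 2-colored, `r`-disjoint,
`3r`-bounded covering of the vertex set of a tree, one of whose members of the first
color is the closed ball `B_{d₀}(v)` in the graph metric. -/
theorem stmt_1 {V : Type*} (G : SimpleGraph V) (hG : G.IsTree) (v : V)
    (r d₀ : ℕ) (hr : 1 ≤ r) (hd₁ : 1 ≤ d₀) (hd₂ : d₀ ≤ r) :
    ∃ 𝒰 : Fin 2 → Set (Set V),
      -- the ball B_{d₀}(v) is a member of the first family
      {x : V | G.dist v x ≤ d₀} ∈ 𝒰 0 ∧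
      -- the union of the two families covers V
      (∀ x : V, ∃ i : Fin 2, ∃ U ∈ 𝒰 i, x ∈ U) ∧
      -- same-colored distinct members are at distance ≥ r
      (∀ i : Fin 2, ∀ U ∈ 𝒰 i, ∀ W ∈ 𝒰 i, U ≠ W →
        ∀ x ∈ U, ∀ y ∈ W, r ≤ G.dist x y) ∧
      -- every member has diameter ≤ 3r
      (∀ i : Fin 2, ∀ U ∈ 𝒰 i, ∀ x ∈ U, ∀ y ∈ U, G.dist x y ≤ 3 * r) := by
    classical
  have hc := hG.isConnected
  obtain ⟨anc, h0, hC, hB⟩ := exists_anc hG v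
  refine ⟨fun i => {U | (i = 0 ∧ U = {x : V | G.dist v x ≤ d₀}) ∨
      ∃ k : ℕ, (k + 1) % 2 = i.val ∧ ∃ w : V, U =
        {x : V | d₀ + k * r + 1 ≤ G.dist v x ∧ G.dist v x ≤ d₀ + (k + 1) * r ∧
          anc (d₀ + k * r + 1 - (r + 1) / 2) x = w}}, ?_, ?_, ?_, ?_⟩
  · exact Or.inl ⟨rfl, rfl⟩
  · -- coverage
    intro x
    by_cases hx : G.dist v x ≤ d₀
    · exact ⟨0, _, Or.inl ⟨rfl, rfl⟩, hx⟩
    · obtain ⟨k, hb1, hb2⟩ : ∃ k : ℕ,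
          d₀ + k * r + 1 ≤ G.dist v x ∧ G.dist v x ≤ d₀ + (k + 1) * r := by
        refine ⟨(G.dist v x - d₀ - 1) / r, ?_, ?_⟩
        · have hdiv : (G.dist v x - d₀ - 1) / r * r ≤ G.dist v x - d₀ - 1 :=
            Nat.div_mul_le_self _ _
          omega
        · have hdm := Nat.div_add_mod (G.dist v x - d₀ - 1) r
          have hmod := Nat.mod_lt (G.dist v x - d₀ - 1) (show 0 < r by omega)
          have hkr : r * ((G.dist v x - d₀ - 1) / r) = (G.dist v x - d₀ - 1) / r * r :=
            Nat.mul_comm _ _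
          have hsucc : ((G.dist v x - d₀ - 1) / r + 1) * r
              = (G.dist v x - d₀ - 1) / r * r + r := by ring
          omega
      exact ⟨⟨(k + 1) % 2, by omega⟩, _,
        Or.inr ⟨k, rfl, anc (d₀ + k * r + 1 - (r + 1) / 2) x, rfl⟩, hb1, hb2, rfl⟩
  · -- separation
    rintro i U hU W hW hUW x hxU y hyW
    have t1 := hc.dist_triangle (u := v) (v := x) (w := y)
    have t2 := hc.dist_triangle (u := v) (v := y) (w := x)
    have t3 : G.dist y x = G.dist x y := SimpleGraph.dist_comm
    have key : ∀ (x y : V) (k k' : ℕ), k + 2 ≤ k' →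
        G.dist v x ≤ d₀ + (k + 1) * r → d₀ + k' * r + 1 ≤ G.dist v y →
        G.dist v y ≤ G.dist v x + G.dist x y → r ≤ G.dist x y := by
      intro x y k k' hkk hx hy tri
      have h1 : (k + 2) * r ≤ k' * r := Nat.mul_le_mul_right r hkk
      have h2 : (k + 2) * r = (k + 1) * r + r := by ring
      omega
    have key0 : ∀ (x y : V) (k' : ℕ), 1 ≤ k' →
        G.dist v x ≤ d₀ → d₀ + k' * r + 1 ≤ G.dist v y →
        G.dist v y ≤ G.dist v x + G.dist x y → r ≤ G.dist x y := by
      intro x y k' hk1 hx hy tri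
      have h1 : r ≤ k' * r := Nat.le_mul_of_pos_left r (by omega)
      omega
    rcases hU with ⟨hi, rfl⟩ | ⟨k, hki, w, rfl⟩ <;>
      rcases hW with ⟨hi', rfl⟩ | ⟨k', hki', w', rfl⟩
    · exact absurd rfl hUW
    · -- ball vs S k'
      obtain ⟨hy1, hy2, -⟩ := hyW
      have hpar : (k' + 1) % 2 = 0 := by rw [hki', hi]; rfl
      exact key0 x y k' (by omega) hxU hy1 t1
    · -- S k vs ball
      obtain ⟨hx1, hx2, -⟩ := hxU
      have hpar : (k + 1) % 2 = 0 := by rw [hki, hi']; rfl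
      have := key0 y x k (by omega) hyW hx1 t2
      omega
    · -- S k vs S k'
      obtain ⟨hx1, hx2, hxw⟩ := hxU
      obtain ⟨hy1, hy2, hyw⟩ := hyW
      rcases eq_or_ne k k' with rfl | hkk
      · rcases eq_or_ne w w' with rfl | hww
        · exact absurd rfl hUW
        · -- same band, different ancestors
          have htx : d₀ + k * r + 1 - (r + 1) / 2 ≤ G.dist v x :=
            le_trans (Nat.sub_le _ _) hx1
          have hty : d₀ + k * r + 1 - (r + 1) / 2 ≤ G.dist v y :=
            le_trans (Nat.sub_le _ _) hy1
          by_cases hcc : (r + 1) / 2 ≤ d₀ + k * r + 1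
          · have hane : anc (d₀ + k * r + 1 - (r + 1) / 2) x ≠
                anc (d₀ + k * r + 1 - (r + 1) / 2) y := by
              rw [hxw, hyw]; exact hww
            have hbnd := hB _ x y htx hty hane
            omega
          · exfalso
            have ht0 : d₀ + k * r + 1 - (r + 1) / 2 = 0 := by omega
            rw [ht0, h0 x] at hxw
            rw [ht0, h0 y] at hyw
            exact hww (hxw ▸ hyw ▸ rfl)
      · -- different bands, same parity
        have hpar : (k + 1) % 2 = (k' + 1) % 2 := by rw [hki, hki']
        rcases le_or_gt (k + 2) k' with hle | hlt
        · exact key x y k k' hle hx2 hy1 t1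
        · have hle' : k' + 2 ≤ k := by omega
          have := key y x k' k hle' hy2 hx1 t2
          omega
  · -- diameter
    rintro i U hU x hxU y hyU
    rcases hU with ⟨hi, rfl⟩ | ⟨k, hki, w, rfl⟩
    · have tri := hc.dist_triangle (u := x) (v := v) (w := y)
      have hcm : G.dist x v = G.dist v x := SimpleGraph.dist_comm
      have hx : G.dist v x ≤ d₀ := hxU
      have hy : G.dist v y ≤ d₀ := hyU
      omega
    · obtain ⟨hx1, hx2, hxw⟩ := hxU
      obtain ⟨hy1, hy2, hyw⟩ := hyU
      have htx : d₀ + k * r + 1 - (r + 1) / 2 ≤ G.dist v x := le_trans (Nat.sub_le _ _) hx1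
      have hty : d₀ + k * r + 1 - (r + 1) / 2 ≤ G.dist v y := le_trans (Nat.sub_le _ _) hy1
      have heq : anc (d₀ + k * r + 1 - (r + 1) / 2) x =
          anc (d₀ + k * r + 1 - (r + 1) / 2) y := by rw [hxw, hyw]
      have hbnd := hC _ x y htx hty heq
      have hsucc : (k + 1) * r = k * r + r := by ring
      by_cases hcc : (r + 1) / 2 ≤ d₀ + k * r + 1
      · omega
      · have hk0 : k = 0 := by
          by_contra hk
          have h1 : r ≤ k * r := Nat.le_mul_of_pos_left r (by omega)
          omega
        subst hk0
        simp only [Nat.zero_mul, Nat.zero_add] at *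
        omega
end

section
/- Let G be a tree (a connected acyclic simple graph) with vertex set V and graph metric d, let v ∈ V, and let r ≥ 1 and k ≥ 1 be integers. On the annulus A_k = {x ∈ V : k·r ≤ d(v,x) ≤ (k+1)·r}, define x ∼_k y if and only if the median m of the triple x, y, v satisfies 2·d(v,m) ≥ (2k−1)·r. Then ∼_k is an equivalence relation on A_k. -/
/-- `m` is the median (center of the tripod) of the vertices `x`, `y`, `v` in the
graph `G`, with respect to the graph metric. -/
def IsTreeMedian {V : Type*} (G : SimpleGraph V) (x y v m : V) : Prop :=
  G.dist x y = G.dist x m + G.dist m y ∧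
  G.dist x v = G.dist x m + G.dist m v ∧
  G.dist y v = G.dist y m + G.dist m v

/-!
In a tree, a vertex `w ≠ v` has exactly one neighbour closer to `v`. Hence a geodesic that
takes one step away from `v` keeps moving away from `v`; inducting along geodesics this gives
medians, and shows that the vertices between `v` and `y` are determined by their distance to `v`,
i.e. they form a chain. Comparing the medians `m₁` of `x, y, v` and `m₂` of `y, z, v` along the
chain between `v` and `y` yields `min (d(v, m₁)) (d(v, m₂)) ≤ d(v, m)` for the median `m` of
`x, z, v`, which is transitivity. Reflexivity holds because `x` is the median of `x, x, v`.
-/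

namespace SimpleGraph

variable {V : Type*} {G : SimpleGraph V} {u v w x y a b : V}

theorem exists_adj_dist_eq_of_dist_eq_add_one {n : ℕ} (h : G.dist u w = n + 1) :
    ∃ u', G.Adj u u' ∧ G.dist u' w = n := by
  obtain ⟨p, hp⟩ := exists_walk_of_dist_ne_zero (by omega : G.dist u w ≠ 0)
  cases p with
  | nil => simp at h
  | @cons _ u' _ hadj p =>
    have hle := dist_le p
    have htri := hadj.reachable.dist_triangle_left w
    rw [dist_eq_one_iff_adj.mpr hadj] at htri
    simp only [Walk.length_cons] at hp
    exact ⟨u', hadj, by omega⟩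

theorem Connected.exists_dist_eq_of_le (hG : G.Connected) {j : ℕ} (h : j ≤ G.dist u w) :
    ∃ c, G.dist u c = j ∧ G.dist c w = G.dist u w - j := by
  induction j generalizing u with
  | zero => exact ⟨u, dist_self, rfl⟩
  | succ j ih =>
    obtain ⟨n, hn⟩ := Nat.exists_eq_add_one_of_ne_zero (by omega : G.dist u w ≠ 0)
    obtain ⟨u', hadj, hu'⟩ := exists_adj_dist_eq_of_dist_eq_add_one hn
    obtain ⟨c, hu'c, hcw⟩ := ih (u := u') (by omega)
    have h₁ : G.dist u c ≤ G.dist u u' + G.dist u' c := hG.dist_triangle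
    have h₂ : G.dist u w ≤ G.dist u c + G.dist c w := hG.dist_triangle
    rw [dist_eq_one_iff_adj.mpr hadj] at h₁
    exact ⟨c, by omega, by omega⟩

theorem IsAcyclic.eq_of_adj_of_dist_lt (hG : G.IsAcyclic) (ha : G.Adj w a) (hb : G.Adj w b)
    (hav : G.dist v a < G.dist v w) (hbv : G.dist v b < G.dist v w) : a = b := by
  have hreach : G.Reachable v w := Reachable.of_dist_ne_zero (by omega)
  have parent_path {c : V} (hc : G.Adj w c) (hcv : G.dist v c < G.dist v w) :
      ∃ p : G.Walk v c, (p.concat hc.symm).IsPath := by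
    obtain ⟨p, hp⟩ := (hreach.trans hc.reachable).exists_walk_length_eq_dist
    refine ⟨p, (p.concat hc.symm).isPath_of_length_eq_dist ?_⟩
    have := hG.dist_eq_dist_add_one_of_adj_of_reachable v hc hreach
    rw [Walk.length_concat]
    omega
  obtain ⟨p, hp⟩ := parent_path ha hav
  obtain ⟨q, hq⟩ := parent_path hb hbv
  have := congrArg Subtype.val ((hG.subsingleton_path v w).elim ⟨_, hp⟩ ⟨_, hq⟩)
  simpa using congrArg Walk.penultimate this

theorem IsTree.dist_eq_add_of_adj_of_dist_lt (hG : G.IsTree) {x' : V} (hadj : G.Adj x x')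
    (hv : G.dist v x < G.dist v x') (hy : G.dist x' y < G.dist x y) :
    G.dist v y = G.dist v x + G.dist x y := by
  induction hn : G.dist x' y generalizing x x' with
  | zero =>
    have hx'y : x' = y := hG.connected.dist_eq_zero_iff.mp hn
    subst hx'y
    have := hG.dist_eq_dist_add_one_of_adj v hadj
    rw [dist_eq_one_iff_adj.mpr hadj]
    omega
  | succ n ih =>
    obtain ⟨x'', hadj', hx''⟩ := exists_adj_dist_eq_of_dist_eq_add_one hn
    have hxy := hG.dist_eq_dist_add_one_of_adj y hadj
    rw [dist_comm (u := y), dist_comm (u := y)] at hxy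
    have hv' : G.dist v x' < G.dist v x'' := by
      by_contra! hle
      have hlt := lt_of_le_of_ne hle (hG.dist_ne_of_adj v hadj').symm
      have hxx'' := hG.isAcyclic.eq_of_adj_of_dist_lt hadj.symm hadj' hv hlt
      subst hxx''
      omega
    have := ih hadj' hv' (by omega) hx''
    have := hG.dist_eq_dist_add_one_of_adj v hadj
    omega

theorem IsTree.eq_of_dist_add_dist_eq_of_dist_eq (hG : G.IsTree)
    (ha : G.dist v a + G.dist a y = G.dist v y) (hb : G.dist v b + G.dist b y = G.dist v y)
    (hab : G.dist v a = G.dist v b) : a = b := by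
  induction hn : G.dist a y generalizing a b with
  | zero =>
    have hay : a = y := hG.connected.dist_eq_zero_iff.mp hn
    have hby : b = y := hG.connected.dist_eq_zero_iff.mp (by omega : G.dist b y = 0)
    rw [hay, hby]
  | succ n ih =>
    have step {c : V} (hc : G.dist v c + G.dist c y = G.dist v y) (hcy : G.dist c y = n + 1) :
        ∃ c', G.Adj c c' ∧ G.dist v c' = G.dist v c + 1 ∧ G.dist c' y = n := by
      obtain ⟨c', hadj, hc'⟩ := exists_adj_dist_eq_of_dist_eq_add_one hcy
      have h₁ : G.dist v c' ≤ G.dist v c + G.dist c c' := hG.connected.dist_triangle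
      have h₂ : G.dist v y ≤ G.dist v c' + G.dist c' y := hG.connected.dist_triangle
      rw [dist_eq_one_iff_adj.mpr hadj] at h₁
      exact ⟨c', hadj, by omega, hc'⟩
    obtain ⟨a', ha', hva', ha'y⟩ := step ha hn
    obtain ⟨b', hb', hvb', hb'y⟩ := step hb (by omega)
    have hab' : a' = b' := ih (a := a') (b := b') (by omega) (by omega) (by omega) ha'y
    subst hab'
    exact hG.isAcyclic.eq_of_adj_of_dist_lt (v := v) ha'.symm hb'.symm (by omega) (by omega)

theorem IsTree.dist_add_dist_eq_of_dist_add_dist_eq (hG : G.IsTree)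
    (ha : G.dist v a + G.dist a y = G.dist v y) (hb : G.dist v b + G.dist b y = G.dist v y)
    (hab : G.dist v a ≤ G.dist v b) : G.dist v a + G.dist a b = G.dist v b := by
  obtain ⟨c, hvc, hcb⟩ := hG.connected.exists_dist_eq_of_le hab
  have h₁ : G.dist c y ≤ G.dist c b + G.dist b y := hG.connected.dist_triangle
  have h₂ : G.dist v y ≤ G.dist v c + G.dist c y := hG.connected.dist_triangle
  have hca : c = a := hG.eq_of_dist_add_dist_eq_of_dist_eq (by omega) ha hvc
  subst hca
  omega

end SimpleGraph

open SimpleGraph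

section IsTreeMedian

variable {V : Type*} {G : SimpleGraph V} {v x y z m m₁ m₂ : V}

theorem isTreeMedian_self (G : SimpleGraph V) (x v : V) : IsTreeMedian G x x v x := by
  simp [IsTreeMedian]

theorem IsTreeMedian.symm (h : IsTreeMedian G x y v m) : IsTreeMedian G y x v m := by
  obtain ⟨hxy, hxv, hyv⟩ := h
  refine ⟨?_, hyv, hxv⟩
  rw [dist_comm (u := y) (v := x), dist_comm (u := y) (v := m), dist_comm (u := m) (v := x)]
  omega

theorem IsTreeMedian.dist_add_dist_left (h : IsTreeMedian G x y v m) :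
    G.dist v m + G.dist m x = G.dist v x := by
  rw [dist_comm (u := v) (v := m), dist_comm (u := v) (v := x), dist_comm (u := m) (v := x)]
  have := h.2.1
  omega

theorem IsTreeMedian.dist_add_dist_right (h : IsTreeMedian G x y v m) :
    G.dist v m + G.dist m y = G.dist v y :=
  h.symm.dist_add_dist_left

theorem SimpleGraph.IsTree.exists_isTreeMedian (hG : G.IsTree) (x y v : V) :
    ∃ m, IsTreeMedian G x y v m := by
  induction hn : G.dist x y generalizing x with
  | zero =>
    rw [← hG.connected.dist_eq_zero_iff.mp hn]
    exact ⟨x, isTreeMedian_self G x v⟩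
  | succ n ih =>
    obtain ⟨x', hadj, hx'⟩ := exists_adj_dist_eq_of_dist_eq_add_one hn
    rcases hG.dist_eq_dist_add_one_of_adj v hadj with hv | hv
    · obtain ⟨m, hx'y, hx'v, hyv⟩ := ih x' hx'
      have h₁ : G.dist x m ≤ G.dist x x' + G.dist x' m := hG.connected.dist_triangle
      have h₂ : G.dist x y ≤ G.dist x m + G.dist m y := hG.connected.dist_triangle
      have h₃ : G.dist x v ≤ G.dist x m + G.dist m v := hG.connected.dist_triangle
      rw [dist_eq_one_iff_adj.mpr hadj] at h₁
      rw [dist_comm (u := v), dist_comm (u := v)] at hv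
      exact ⟨m, by omega, by omega, hyv⟩
    · have hvy := hG.dist_eq_add_of_adj_of_dist_lt (v := v) hadj (by omega)
        (by omega : G.dist x' y < G.dist x y)
      refine ⟨x, by simp, by simp, ?_⟩
      rw [dist_comm (u := y) (v := x), dist_comm (u := y) (v := v),
        dist_comm (u := x) (v := v)]
      omega

-- `G.dist v m` is the Gromov product `(x | z)_v`: this is the `0`-hyperbolicity of trees.
theorem SimpleGraph.IsTree.min_dist_le_of_isTreeMedian (hG : G.IsTree)
    (h₁ : IsTreeMedian G x y v m₁) (h₂ : IsTreeMedian G y z v m₂) (h : IsTreeMedian G x z v m) :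
    min (G.dist v m₁) (G.dist v m₂) ≤ G.dist v m := by
  wlog hle : G.dist v m₁ ≤ G.dist v m₂ generalizing x z m₁ m₂
  · rw [min_comm]
    exact this h₂.symm h₁.symm h.symm (le_of_not_ge hle)
  have hm₁₂ := hG.dist_add_dist_eq_of_dist_add_dist_eq h₁.dist_add_dist_right
    h₂.dist_add_dist_left hle
  have hxz : G.dist x z ≤ G.dist x m₁ + G.dist m₁ z := hG.connected.dist_triangle
  have hm₁z : G.dist m₁ z ≤ G.dist m₁ m₂ + G.dist m₂ z := hG.connected.dist_triangle
  have hxm₁ := h₁.dist_add_dist_left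
  have hzm₂ := h₂.dist_add_dist_right
  have hxm := h.dist_add_dist_left
  have hzm := h.dist_add_dist_right
  rw [dist_comm (u := m₁) (v := x)] at hxm₁
  rw [dist_comm (u := m) (v := x)] at hxm
  rw [min_eq_left hle]
  have := h.1
  omega

end IsTreeMedian

theorem stmt_2_general {V : Type*} (G : SimpleGraph V) (hG : G.IsTree) (v : V)
    (r k : ℕ) :
    let A : Set V := {x | k * r ≤ G.dist v x ∧ G.dist v x ≤ (k + 1) * r}
    let rel : V → V → Prop := fun x y =>
      ∃ m : V, IsTreeMedian G x y v m ∧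
        (2 * (k : ℤ) - 1) * r ≤ 2 * (G.dist v m : ℤ)
    -- reflexive on A
    (∀ x ∈ A, rel x x) ∧
    -- symmetric on A
    (∀ x ∈ A, ∀ y ∈ A, rel x y → rel y x) ∧
    -- transitive on A
    (∀ x ∈ A, ∀ y ∈ A, ∀ z ∈ A, rel x y → rel y z → rel x z) := by
  intro A rel
  refine ⟨fun x hx ↦ ⟨x, isTreeMedian_self G x v, ?_⟩,
    fun x _ y _ ⟨m, hm, hvm⟩ ↦ ⟨m, hm.symm, hvm⟩, ?_⟩
  · have hkr : ((k * r : ℕ) : ℤ) ≤ G.dist v x := by exact_mod_cast hx.1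
    push_cast at hkr
    linarith [(r.cast_nonneg : (0 : ℤ) ≤ r)]
  · rintro x - y - z - ⟨m₁, h₁, hvm₁⟩ ⟨m₂, h₂, hvm₂⟩
    obtain ⟨m, hm⟩ := hG.exists_isTreeMedian x z v
    refine ⟨m, hm, ?_⟩
    rcases min_le_iff.mp (hG.min_dist_le_of_isTreeMedian h₁ h₂ hm) with hle | hle
    · exact hvm₁.trans (by exact_mod_cast Nat.mul_le_mul_left 2 hle)
    · exact hvm₂.trans (by exact_mod_cast Nat.mul_le_mul_left 2 hle)

/-- On the annulus `A_k = {x : k·r ≤ d(v,x) ≤ (k+1)·r}` of a tree, the relation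
`x ∼_k y ↔ 2·d(v,m) ≥ (2k−1)·r`, where `m` is the median of `x, y, v`, is an
equivalence relation. -/
theorem stmt_2 {V : Type*} (G : SimpleGraph V) (hG : G.IsTree) (v : V)
    (r k : ℕ) (hr : 1 ≤ r) (hk : 1 ≤ k) :
    let A : Set V := {x | k * r ≤ G.dist v x ∧ G.dist v x ≤ (k + 1) * r}
    let rel : V → V → Prop := fun x y =>
      ∃ m : V, IsTreeMedian G x y v m ∧
        (2 * (k : ℤ) - 1) * r ≤ 2 * (G.dist v m : ℤ)
    -- reflexive on A
    (∀ x ∈ A, rel x x) ∧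
    -- symmetric on A
    (∀ x ∈ A, ∀ y ∈ A, rel x y → rel y x) ∧
    -- transitive on A
    (∀ x ∈ A, ∀ y ∈ A, ∀ z ∈ A, rel x y → rel y z → rel x z) :=
  stmt_2_general G hG v r k
end

section
/- Let X and Y be metric spaces, let r > 0 and D, D' ≥ 0 be reals, and let n, m be positive integers. Suppose 𝒰 is an n-colored, r-disjoint, D-bounded covering of X and 𝒱 is an m-colored, r-disjoint, D'-bounded covering of Y. Then the family of all products U × V, for U a member of 𝒰 and V a member of 𝒱, colored by the pair of colors of U and V, is an (n·m)-colored, r-disjoint, √(D² + D'²)-bounded covering of the ℓ²-product of X and Y (the product X × Y equipped with the metric d((x,y),(x',y')) = √(d_X(x,x')² + d_Y(y,y')²); in Mathlib, WithLp 2 (X × Y)). -/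
/-- Product of colored coverings: if `𝒰` is an `n`-colored, `r`-disjoint, `D`-bounded
covering of `X` and `𝒱` is an `m`-colored, `r`-disjoint, `D'`-bounded covering of `Y`,
then the family of products `U × V` colored by pairs of colors is an `n·m`-colored,
`r`-disjoint, `√(D² + D'²)`-bounded covering of the ℓ²-product `WithLp 2 (X × Y)`. -/
theorem stmt_6 {X Y : Type*} [MetricSpace X] [MetricSpace Y]
    (r D D' : ℝ) (hr : 0 < r) (hD : 0 ≤ D) (hD' : 0 ≤ D')
    (n m : ℕ) (hn : 0 < n) (hm : 0 < m)
    (𝒰 : Fin n → Set (Set X)) (𝒱 : Fin m → Set (Set Y))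
    (h𝒰cov : ∀ x : X, ∃ i : Fin n, ∃ U ∈ 𝒰 i, x ∈ U)
    (h𝒰disj : ∀ i : Fin n, ∀ U ∈ 𝒰 i, ∀ U' ∈ 𝒰 i, U ≠ U' →
      ∀ x ∈ U, ∀ y ∈ U', r ≤ dist x y)
    (h𝒰bdd : ∀ i : Fin n, ∀ U ∈ 𝒰 i, ∀ x ∈ U, ∀ y ∈ U, dist x y ≤ D)
    (h𝒱cov : ∀ y : Y, ∃ j : Fin m, ∃ V ∈ 𝒱 j, y ∈ V)
    (h𝒱disj : ∀ j : Fin m, ∀ V ∈ 𝒱 j, ∀ V' ∈ 𝒱 j, V ≠ V' →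
      ∀ x ∈ V, ∀ y ∈ V', r ≤ dist x y)
    (h𝒱bdd : ∀ j : Fin m, ∀ V ∈ 𝒱 j, ∀ x ∈ V, ∀ y ∈ V, dist x y ≤ D') :
    -- the family of all products U × V, colored by the pair of colors of U and V
    let Pr : Fin n × Fin m → Set (Set (WithLp 2 (X × Y))) := fun c =>
      {W | ∃ U ∈ 𝒰 c.1, ∃ V ∈ 𝒱 c.2,
        W = {p | (WithLp.equiv 2 (X × Y) p).1 ∈ U ∧ (WithLp.equiv 2 (X × Y) p).2 ∈ V}}
    -- it covers the ℓ²-product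
    (∀ p : WithLp 2 (X × Y), ∃ c : Fin n × Fin m, ∃ W ∈ Pr c, p ∈ W) ∧
    -- distinct same-colored members are at distance ≥ r
    (∀ c : Fin n × Fin m, ∀ W ∈ Pr c, ∀ W' ∈ Pr c, W ≠ W' →
      ∀ p ∈ W, ∀ q ∈ W', r ≤ dist p q) ∧
    -- every member has diameter ≤ √(D² + D'²)
    (∀ c : Fin n × Fin m, ∀ W ∈ Pr c, ∀ p ∈ W, ∀ q ∈ W,
      dist p q ≤ Real.sqrt (D ^ 2 + D' ^ 2)) := by
  intro Pr
  have hdist : ∀ p q : WithLp 2 (X × Y),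
      dist p q = Real.sqrt (dist p.fst q.fst ^ 2 + dist p.snd q.snd ^ 2) := by
    intro p q
    rw [WithLp.prod_dist_eq_add (by norm_num : (0:ℝ) < ENNReal.toReal 2)]
    rw [show ENNReal.toReal 2 = ((2:ℕ):ℝ) by norm_num,
      Real.rpow_natCast, Real.rpow_natCast, Real.sqrt_eq_rpow]
    norm_num
  refine ⟨?_, ?_, ?_⟩
  · intro p
    obtain ⟨i, U, hU, hpU⟩ := h𝒰cov p.fst
    obtain ⟨j, V, hV, hpV⟩ := h𝒱cov p.snd
    exact ⟨(i, j), _, ⟨U, hU, V, hV, rfl⟩, hpU, hpV⟩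
  · rintro ⟨i, j⟩ W ⟨U, hU, V, hV, rfl⟩ W' ⟨U', hU', V', hV', rfl⟩ hne p hp q hq
    have hne' : U ≠ U' ∨ V ≠ V' := by
      by_contra h
      push_neg at h
      exact hne (by rw [h.1, h.2])
    have key : ∀ a b : ℝ, 0 ≤ a → 0 ≤ b → r ≤ a → r ≤ Real.sqrt (a ^ 2 + b ^ 2) := by
      intro a b ha hb hra
      calc r ≤ a := hra
        _ = Real.sqrt (a ^ 2) := (Real.sqrt_sq ha).symm
        _ ≤ Real.sqrt (a ^ 2 + b ^ 2) := Real.sqrt_le_sqrt (le_add_of_nonneg_right (sq_nonneg b))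
    rw [hdist]
    rcases hne' with h | h
    · exact key _ _ dist_nonneg dist_nonneg
        (h𝒰disj i U hU U' hU' h _ hp.1 _ hq.1)
    · rw [add_comm]
      exact key _ _ dist_nonneg dist_nonneg
        (h𝒱disj j V hV V' hV' h _ hp.2 _ hq.2)
  · rintro ⟨i, j⟩ W ⟨U, hU, V, hV, rfl⟩ p hp q hq
    rw [hdist]
    apply Real.sqrt_le_sqrt
    gcongr
    · exact h𝒰bdd i U hU _ hp.1 _ hq.1
    · exact h𝒱bdd j V hV _ hp.2 _ hq.2
end

section
/- Let X be a metric space and n a natural number. Suppose there exists a constant C₁ > 0 such that for every real r with 0 < r ≤ 1 there is an (n+1)-colored, r-disjoint, C₁·r-bounded covering of X, and there exist constants C₂ > 0 and R₀ ≥ 1 such that for every real r ≥ R₀ there is an (n+1)-colored, r-disjoint, C₂·r-bounded covering of X. Then there exists a constant C > 0 such that for every real r > 0 there is an (n+1)-colored, r-disjoint, C·r-bounded covering of X. (This is the nontrivial direction of the paper's observation that the Assouad–Nagata dimension of X equals the maximum of its linearly-controlled dimension ℓ-dim X and its linearly-controlled asymptotic dimension ℓ-asdim X.) -/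
/-- `X` admits an `n`-colored, `r`-disjoint, `D`-bounded covering. -/
def HasColoredCover (X : Type*) [MetricSpace X] (n : ℕ) (r D : ℝ) : Prop :=
  ∃ 𝒰 : Fin n → Set (Set X),
    (∀ x : X, ∃ i : Fin n, ∃ U ∈ 𝒰 i, x ∈ U) ∧
    (∀ i : Fin n, ∀ U ∈ 𝒰 i, ∀ W ∈ 𝒰 i, U ≠ W →
      ∀ x ∈ U, ∀ y ∈ W, r ≤ dist x y) ∧
    (∀ i : Fin n, ∀ U ∈ 𝒰 i, ∀ x ∈ U, ∀ y ∈ U, dist x y ≤ D)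

/-- Monotonicity: a cover with larger separation and smaller diameter bound works. -/
theorem HasColoredCover.mono {X : Type*} [MetricSpace X] {n : ℕ} {r r' D D' : ℝ}
    (h : HasColoredCover X n r' D') (hr : r ≤ r') (hD : D' ≤ D) :
    HasColoredCover X n r D := by
  obtain ⟨𝒰, hcov, hdisj, hbd⟩ := h
  exact ⟨𝒰, hcov,
    fun i U hU W hW hUW x hx y hy => le_trans hr (hdisj i U hU W hW hUW x hx y hy),
    fun i U hU x hx y hy => le_trans (hbd i U hU x hx y hy) hD⟩

/-- If `X` has linearly controlled `(n+1)`-colored coverings at all small scales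
`0 < r ≤ 1` and at all sufficiently large scales `r ≥ R₀`, then it has them at all
scales `r > 0`; i.e. `dim_AN X = max(ℓ-dim X, ℓ-asdim X)` (nontrivial direction). -/
theorem stmt_8 {X : Type*} [MetricSpace X] (n : ℕ)
    (hsmall : ∃ C₁ : ℝ, 0 < C₁ ∧ ∀ r : ℝ, 0 < r → r ≤ 1 →
      HasColoredCover X (n + 1) r (C₁ * r))
    (hlarge : ∃ C₂ : ℝ, 0 < C₂ ∧ ∃ R₀ : ℝ, 1 ≤ R₀ ∧ ∀ r : ℝ, R₀ ≤ r →
      HasColoredCover X (n + 1) r (C₂ * r)) :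
    ∃ C : ℝ, 0 < C ∧ ∀ r : ℝ, 0 < r → HasColoredCover X (n + 1) r (C * r) := by
  obtain ⟨C₁, hC₁, h₁⟩ := hsmall
  obtain ⟨C₂, hC₂, R₀, hR₀, h₂⟩ := hlarge
  refine ⟨max C₁ (C₂ * R₀), lt_max_of_lt_left hC₁, fun r hr => ?_⟩
  rcases le_or_gt r 1 with hr1 | hr1
  · exact HasColoredCover.mono (h₁ r hr hr1) le_rfl
      (mul_le_mul_of_nonneg_right (le_max_left _ _) hr.le)
  · refine HasColoredCover.mono (h₂ (max r R₀) (le_max_right _ _))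
      (le_max_left _ _) ?_
    calc C₂ * max r R₀ ≤ C₂ * (R₀ * r) := by
          refine mul_le_mul_of_nonneg_left (max_le ?_ ?_) hC₂.le
          · exact le_mul_of_one_le_left hr.le hR₀
          · exact le_mul_of_one_le_right (le_trans zero_le_one hR₀) hr1.le
      _ = C₂ * R₀ * r := by ring
      _ ≤ max C₁ (C₂ * R₀) * r :=
          mul_le_mul_of_nonneg_right (le_max_right _ _) hr.le
end
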